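/- arXiv:2111.06983 — 2 statements merged into one kernel-verified Lean document; each statement's English description precedes it below -/
import Mathlib

section
/- Let M be a matroid of rank r ≥ 2 that is a direct sum M = M₁ ⊕ M₂, where M₁ has a positive coline L. Then L ∪ E(M₂) is a positive coline of M. -/
open Set Matroid

namespace PositroidPaper

variable {α V : Type*}

/-- A circuit of a matroid: a minimal dependent set. -/
def Circuit (M : Matroid α) (C : Set α) : Prop :=
  M.Dep C ∧ ∀ D, D ⊂ C → M.Indep D

/-- A copoint (hyperplane): a maximal proper flat. -/
def IsCopoint (M : Matroid α) (H : Set α) : Prop :=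
  M.IsFlat H ∧ H ≠ M.E ∧ ∀ F, M.IsFlat F → H ⊂ F → F = M.E

/-- A coline: a flat of corank 2, i.e. a maximal flat properly contained in a copoint. -/
def IsColine (M : Matroid α) (L : Set α) : Prop :=
  M.IsFlat L ∧ L ≠ M.E ∧ ¬ IsCopoint M L ∧
    ∀ F, M.IsFlat F → L ⊂ F → F = M.E ∨ IsCopoint M F

/-- `H` is a simple copoint on the coline `L`. -/
def SimpleCopointOn (M : Matroid α) (L H : Set α) : Prop :=
  IsCopoint M H ∧ L ⊆ H ∧ (H \ L).ncard = 1

/-- `H` is a multiple copoint on the coline `L`. -/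
def MultipleCopointOn (M : Matroid α) (L H : Set α) : Prop :=
  IsCopoint M H ∧ L ⊆ H ∧ (H \ L).ncard ≠ 1

/-- A coline is positive if it lies on more simple than multiple copoints. -/
def PositiveColine (M : Matroid α) (L : Set α) : Prop :=
  IsColine M L ∧
    {H | MultipleCopointOn M L H}.ncard < {H | SimpleCopointOn M L H}.ncard

/-- A matroid has rank at least `n`. -/
def RankAtLeast (M : Matroid α) (n : ℕ) : Prop :=
  ∃ B, M.IsBase B ∧ n ≤ B.ncard

/-- A coloop: an element contained in every basis. -/
def Coloop (M : Matroid α) (e : α) : Prop :=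
  e ∈ M.E ∧ ∀ B, M.IsBase B → e ∈ B

/-- A matroid is connected if every pair of distinct elements lies in a common circuit. -/
def Connected (M : Matroid α) : Prop :=
  M.E.Nonempty ∧ ∀ e ∈ M.E, ∀ f ∈ M.E, e ≠ f → ∃ C, Circuit M C ∧ e ∈ C ∧ f ∈ C

/-- A directed path in a digraph with adjacency `Adj`: a nonempty, non-repeating
sequence of vertices with consecutive pairs joined by arcs. -/
def IsPath (Adj : V → V → Prop) (p : List V) : Prop :=
  p ≠ [] ∧ p.Nodup ∧ p.Chain' Adj

/-- A routing from `X` to `Y`: a family of pairwise vertex-disjoint directed paths,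
each `x ∈ X` being the initial vertex of some path, every path ending in `Y`. -/
def IsRouting (Adj : V → V → Prop) (X Y : Set V) (R : Set (List V)) : Prop :=
  (∀ p ∈ R, IsPath Adj p) ∧
  (∀ x ∈ X, ∃ p ∈ R, p.head? = some x) ∧
  (∀ p ∈ R, ∀ y, p.getLast? = some y → y ∈ Y) ∧
  (∀ p ∈ R, ∀ q ∈ R, p = q ∨ ∀ v, v ∈ p → v ∉ q)

/-- A linking from `X` to `Y`: a routing from `X` onto `Y`. -/
def IsLinking (Adj : V → V → Prop) (X Y : Set V) (R : Set (List V)) : Prop :=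
  IsRouting Adj X Y R ∧ Y = {y | ∃ p ∈ R, p.getLast? = some y}

/-- `M` is the gammoid `Γ(D,T,E)` represented by the digraph `Adj` with targets `T`
and ground set `E`: the independent sets are those subsets of `E` routable into `T`. -/
def IsGammoid (Adj : V → V → Prop) (T E : Set V) (M : Matroid V) : Prop :=
  M.E = E ∧ ∀ X, M.Indep X ↔ X ⊆ E ∧ ∃ R, IsRouting Adj X T R


/-! The flats of `M₁ ⊕ M₂` are the sets `F₁ ∪ F₂` with `Fᵢ` a flat of `Mᵢ`, so `F ↦ F ∪ E(M₂)` is an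
order isomorphism from the flats of `M₁` onto the flats of `M₁ ⊕ M₂` containing `E(M₂)`. Copoints
and colines are defined by the order of flats alone, so it carries the copoints of `M₁` on `L` to
those of `M₁ ⊕ M₂` on `L ∪ E(M₂)`, and since `(H ∪ E(M₂)) \ (L ∪ E(M₂)) = H \ L` it keeps simple
copoints simple and multiple ones multiple. -/

lemma union_subset_union_left_iff_of_disjoint {s t u : Set α} (hs : Disjoint s u) :
    s ∪ u ⊆ t ∪ u ↔ s ⊆ t :=
  ⟨fun h ↦ hs.subset_left_of_subset_union (subset_union_left.trans h), union_subset_union_left u⟩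

lemma union_ssubset_union_left_iff_of_disjoint {s t u : Set α} (hs : Disjoint s u)
    (ht : Disjoint t u) : s ∪ u ⊂ t ∪ u ↔ s ⊂ t := by
  simp only [ssubset_def, union_subset_union_left_iff_of_disjoint hs,
    union_subset_union_left_iff_of_disjoint ht]

lemma union_eq_union_left_iff_of_disjoint {s t u : Set α} (hs : Disjoint s u)
    (ht : Disjoint t u) : s ∪ u = t ∪ u ↔ s = t := by
  simp only [subset_antisymm_iff, union_subset_union_left_iff_of_disjoint hs,
    union_subset_union_left_iff_of_disjoint ht]

lemma union_diff_union_right_of_disjoint {s t u : Set α} (hs : Disjoint s u) :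
    (s ∪ u) \ (t ∪ u) = s \ t := by
  rw [union_comm t u, ← sdiff_sdiff, union_sdiff_right, hs.sdiff_eq_left]

lemma union_inter_eq_left_of_disjoint {s t u : Set α} (hs : s ⊆ u) (ht : Disjoint t u) :
    (s ∪ t) ∩ u = s := by
  rw [union_inter_distrib_right, inter_eq_left.2 hs, ht.inter_eq, union_empty]

lemma union_inter_eq_right_of_disjoint {s t u : Set α} (hs : Disjoint s u) (ht : t ⊆ u) :
    (s ∪ t) ∩ u = t := by
  rw [union_comm, union_inter_eq_left_of_disjoint ht hs]

section DisjointSum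

variable {M₁ M₂ : Matroid α} {h : Disjoint M₁.E M₂.E}

lemma disjointSum_isBasis_union {I J X Y : Set α} (hIX : M₁.IsBasis I X) (hJY : M₂.IsBasis J Y) :
    (M₁.disjointSum M₂ h).IsBasis (I ∪ J) (X ∪ Y) := by
  have hX := hIX.subset_ground
  have hY := hJY.subset_ground
  have hI := hIX.indep.subset_ground
  have hJ := hJY.indep.subset_ground
  rw [disjointSum_isBasis_iff, union_inter_eq_left_of_disjoint hI (h.symm.mono_left hJ),
    union_inter_eq_left_of_disjoint hX (h.symm.mono_left hY),
    union_inter_eq_right_of_disjoint (h.mono_left hI) hJ,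
    union_inter_eq_right_of_disjoint (h.mono_left hX) hY]
  exact ⟨hIX, hJY, union_subset_union hIX.subset hJY.subset, union_subset_union hX hY⟩

lemma isFlat_inter_ground_left_of_disjointSum {F : Set α} (hF : (M₁.disjointSum M₂ h).IsFlat F) :
    M₁.IsFlat (F ∩ M₁.E) := by
  refine ⟨fun I X hIF hIX ↦ ?_, inter_subset_right⟩
  obtain ⟨J, hJ⟩ := M₂.exists_isBasis (F ∩ M₂.E)
  have hF_eq : F ∩ M₁.E ∪ F ∩ M₂.E = F := by
    rw [← inter_union_distrib_left, inter_eq_left.2 (by simpa using hF.subset_ground)]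
  have hXF := hF.subset_of_isBasis_of_isBasis (hF_eq ▸ disjointSum_isBasis_union hIF hJ)
    (disjointSum_isBasis_union (h := h) hIX hJ)
  exact subset_inter (subset_union_left.trans hXF) hIX.subset_ground

lemma isFlat_disjointSum_iff {F : Set α} :
    (M₁.disjointSum M₂ h).IsFlat F ↔
      M₁.IsFlat (F ∩ M₁.E) ∧ M₂.IsFlat (F ∩ M₂.E) ∧ F ⊆ M₁.E ∪ M₂.E := by
  refine ⟨fun hF ↦ ⟨isFlat_inter_ground_left_of_disjointSum hF, ?_,
    by simpa using hF.subset_ground⟩, fun ⟨hF₁, hF₂, hFE⟩ ↦ ⟨fun I X hIF hIX ↦ ?_, by simpa⟩⟩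
  · rw [disjointSum_comm] at hF
    exact isFlat_inter_ground_left_of_disjointSum hF
  rw [disjointSum_isBasis_iff] at hIF hIX
  intro x hx
  rcases hIX.2.2.2 hx with hx₁ | hx₂
  · exact (hF₁.subset_of_isBasis_of_isBasis hIF.1 hIX.1 ⟨hx, hx₁⟩).1
  · exact (hF₂.subset_of_isBasis_of_isBasis hIF.2.1 hIX.2.1 ⟨hx, hx₂⟩).1

lemma isFlat_disjointSum_union_ground_iff {F : Set α} (hF : F ⊆ M₁.E) :
    (M₁.disjointSum M₂ h).IsFlat (F ∪ M₂.E) ↔ M₁.IsFlat F := by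
  rw [isFlat_disjointSum_iff, union_inter_eq_left_of_disjoint hF h.symm, union_inter_cancel_right]
  exact ⟨And.left, fun hF' ↦ ⟨hF', M₂.ground_isFlat, union_subset_union_left _ hF⟩⟩

lemma exists_isFlat_eq_union_ground_of_disjointSum {G : Set α}
    (hG : (M₁.disjointSum M₂ h).IsFlat G) (hG₂ : M₂.E ⊆ G) :
    ∃ F, M₁.IsFlat F ∧ G = F ∪ M₂.E := by
  refine ⟨G ∩ M₁.E, isFlat_inter_ground_left_of_disjointSum hG, ?_⟩
  rw [union_comm, union_inter_distrib_left, union_eq_right.2 hG₂,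
    inter_eq_left.2 (by simpa [union_comm] using hG.subset_ground)]

lemma isCopoint_disjointSum_union_ground_iff {H : Set α} (hH : M₁.IsFlat H) :
    IsCopoint (M₁.disjointSum M₂ h) (H ∪ M₂.E) ↔ IsCopoint M₁ H := by
  have hH₂ := h.mono_left hH.subset_ground
  simp only [IsCopoint, disjointSum_ground_eq, ne_eq,
    isFlat_disjointSum_union_ground_iff hH.subset_ground, union_eq_union_left_iff_of_disjoint hH₂ h,
    hH, true_and]
  refine and_congr_right fun _ ↦ ⟨fun hmax F hF hHF ↦ ?_, fun hmax G hG hHG ↦ ?_⟩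
  · have hF₂ := h.mono_left hF.subset_ground
    rw [← union_eq_union_left_iff_of_disjoint hF₂ h]
    exact hmax _ ((isFlat_disjointSum_union_ground_iff hF.subset_ground).2 hF)
      ((union_ssubset_union_left_iff_of_disjoint hH₂ hF₂).2 hHF)
  · obtain ⟨F, hF, rfl⟩ :=
      exists_isFlat_eq_union_ground_of_disjointSum hG (subset_union_right.trans hHG.subset)
    have hF₂ := h.mono_left hF.subset_ground
    rw [union_eq_union_left_iff_of_disjoint hF₂ h]
    exact hmax F hF ((union_ssubset_union_left_iff_of_disjoint hH₂ hF₂).1 hHG)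

lemma IsColine.union_ground_disjointSum {L : Set α} (hL : IsColine M₁ L) :
    IsColine (M₁.disjointSum M₂ h) (L ∪ M₂.E) := by
  obtain ⟨hLflat, hLne, hLcop, hmax⟩ := hL
  have hL₂ := h.mono_left hLflat.subset_ground
  refine ⟨(isFlat_disjointSum_union_ground_iff hLflat.subset_ground).2 hLflat, ?_, ?_,
    fun G hG hLG ↦ ?_⟩
  · rwa [disjointSum_ground_eq, Ne, union_eq_union_left_iff_of_disjoint hL₂ h]
  · rwa [isCopoint_disjointSum_union_ground_iff hLflat]
  obtain ⟨F, hF, rfl⟩ :=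
    exists_isFlat_eq_union_ground_of_disjointSum hG (subset_union_right.trans hLG.subset)
  have hF₂ := h.mono_left hF.subset_ground
  rw [disjointSum_ground_eq, union_eq_union_left_iff_of_disjoint hF₂ h,
    isCopoint_disjointSum_union_ground_iff hF]
  exact hmax F hF ((union_ssubset_union_left_iff_of_disjoint hL₂ hF₂).1 hLG)

lemma image_copointsOn_disjointSum {L : Set α} (hL : L ⊆ M₁.E) (P : Set α → Prop) :
    (· ∪ M₂.E) '' {H | IsCopoint M₁ H ∧ L ⊆ H ∧ P (H \ L)} =
      {H | IsCopoint (M₁.disjointSum M₂ h) H ∧ L ∪ M₂.E ⊆ H ∧ P (H \ (L ∪ M₂.E))} := by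
  have hL₂ := h.mono_left hL
  ext G
  constructor
  · rintro ⟨H, ⟨hH, hLH, hP⟩, rfl⟩
    refine ⟨(isCopoint_disjointSum_union_ground_iff hH.1).2 hH, union_subset_union_left _ hLH, ?_⟩
    rwa [union_diff_union_right_of_disjoint (h.mono_left hH.1.subset_ground)]
  · rintro ⟨hG, hLG, hP⟩
    obtain ⟨H, hH, rfl⟩ :=
      exists_isFlat_eq_union_ground_of_disjointSum hG.1 (subset_union_right.trans hLG)
    rw [union_diff_union_right_of_disjoint (h.mono_left hH.subset_ground)] at hP
    exact ⟨H, ⟨(isCopoint_disjointSum_union_ground_iff hH).1 hG,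
      (union_subset_union_left_iff_of_disjoint hL₂).1 hLG, hP⟩, rfl⟩

lemma ncard_copointsOn_disjointSum {L : Set α} (hL : L ⊆ M₁.E) (P : Set α → Prop) :
    {H | IsCopoint (M₁.disjointSum M₂ h) H ∧ L ∪ M₂.E ⊆ H ∧ P (H \ (L ∪ M₂.E))}.ncard =
      {H | IsCopoint M₁ H ∧ L ⊆ H ∧ P (H \ L)}.ncard := by
  rw [← image_copointsOn_disjointSum hL P]
  refine InjOn.ncard_image fun H hH H' hH' hHH' ↦ ?_
  exact (union_eq_union_left_iff_of_disjoint (h.mono_left hH.1.1.subset_ground)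
    (h.mono_left hH'.1.1.subset_ground)).1 hHH'

end DisjointSum

theorem positiveColine_of_directSum_general (M M₁ M₂ : Matroid α)
    (hdisj : Disjoint M₁.E M₂.E) (hM : M = M₁.disjointSum M₂ hdisj)
    (L : Set α) (hL : PositiveColine M₁ L) :
    PositiveColine M (L ∪ M₂.E) := by
  subst hM
  have hLE := hL.1.1.subset_ground
  refine ⟨hL.1.union_ground_disjointSum, ?_⟩
  calc {H | MultipleCopointOn _ (L ∪ M₂.E) H}.ncard
      = {H | MultipleCopointOn M₁ L H}.ncard :=
        ncard_copointsOn_disjointSum hLE fun D ↦ D.ncard ≠ 1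
    _ < {H | SimpleCopointOn M₁ L H}.ncard := hL.2
    _ = {H | SimpleCopointOn _ (L ∪ M₂.E) H}.ncard :=
        (ncard_copointsOn_disjointSum hLE fun D ↦ D.ncard = 1).symm

/-- If `M = M₁ ⊕ M₂` has rank at least 2 and `L` is a positive coline of `M₁`,
then `L ∪ E(M₂)` is a positive coline of `M`. -/
theorem positiveColine_of_directSum (M M₁ M₂ : Matroid α)
    (hdisj : Disjoint M₁.E M₂.E) (hM : M = M₁.disjointSum M₂ hdisj)
    (hrank : RankAtLeast M 2) (L : Set α) (hL : PositiveColine M₁ L) :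
    PositiveColine M (L ∪ M₂.E) :=
  positiveColine_of_directSum_general M M₁ M₂ hdisj hM L hL
end PositroidPaper
end

section
/- Let M = Γ(D,T,E) be a gammoid with T ⊆ E, let t ∈ T, and let e ∈ E \ T be such that every directed path in D starting at e passes through t and ends in T. If moreover {e} is independent, then e and t are parallel in M. -/
open Set Matroid

namespace PositroidPaper

variable {α V : Type*}

/-! In a routing of `{e, t}`, the path leaving `e` must pass through `t`, which already lies on
the path leaving `t`; this contradicts disjointness, so `{e, t}` is dependent. Each singleton
of `T` is routed by a one-vertex path, and with `{e}` independent this makes `{e, t}` a circuit. -/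

theorem circuit_iff_isCircuit {M : Matroid α} {C : Set α} : Circuit M C ↔ M.IsCircuit C :=
  isCircuit_iff_forall_ssubset.symm

theorem circuit_pair_of_not_indep {M : Matroid α} {a b : α} (hab : a ≠ b)
    (ha : M.Indep {a}) (hb : M.Indep {b}) (hdep : ¬ M.Indep {a, b}) : Circuit M {a, b} := by
  have hground : {a, b} ⊆ M.E := insert_subset (ha.subset_ground rfl) hb.subset_ground
  rw [circuit_iff_isCircuit, isCircuit_iff_dep_forall_sdiff_singleton_indep]
  refine ⟨(not_indep_iff hground).1 hdep, ?_⟩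
  rintro x (rfl | rfl)
  · rwa [pair_sdiff_left hab]
  · rwa [pair_sdiff_right hab]

theorem isPath_singleton (Adj : V → V → Prop) (v : V) : IsPath Adj [v] :=
  ⟨List.cons_ne_nil v [], List.nodup_singleton v, List.isChain_singleton v⟩

theorem isRouting_singleton (Adj : V → V → Prop) {Y : Set V} {y : V} (hy : y ∈ Y) :
    IsRouting Adj {y} Y {[y]} := by
  refine ⟨?_, ?_, ?_, ?_⟩
  · rintro p rfl
    exact isPath_singleton Adj y
  · rintro x rfl
    exact ⟨[x], rfl, rfl⟩
  · rintro p rfl z hz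
    cases Option.some.inj hz
    exact hy
  · rintro p rfl q rfl
    exact Or.inl rfl

theorem IsGammoid.indep_singleton_of_mem {Adj : V → V → Prop} {T E : Set V} {M : Matroid V}
    (hM : IsGammoid Adj T E M) (hTE : T ⊆ E) {t : V} (ht : t ∈ T) : M.Indep {t} :=
  (hM.2 {t}).2 ⟨singleton_subset_iff.2 (hTE ht), _, isRouting_singleton Adj ht⟩

theorem not_isRouting_pair_of_forall_path_mem {Adj : V → V → Prop} {Y : Set V} {e t : V}
    (het : e ≠ t) (hpath : ∀ p, IsPath Adj p → p.head? = some e →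
      (∃ y ∈ Y, p.getLast? = some y) → t ∈ p) (R : Set (List V)) :
    ¬ IsRouting Adj {e, t} Y R := by
  rintro ⟨hpaths, hcover, hend, hdisj⟩
  obtain ⟨p, hp, hpe⟩ := hcover e (mem_insert e {t})
  obtain ⟨q, hq, hqt⟩ := hcover t (mem_insert_of_mem e rfl)
  have hpne : p ≠ [] := (hpaths p hp).1
  have hlast : p.getLast? = some (p.getLast hpne) := List.getLast?_eq_some_getLast hpne
  have htp : t ∈ p := hpath p (hpaths p hp) hpe ⟨_, hend p hp _ hlast, hlast⟩
  have htq : t ∈ q := List.mem_of_mem_head? hqt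
  rcases hdisj p hp q hq with rfl | hpq
  · exact het (Option.some.inj (hpe.symm.trans hqt))
  · exact hpq t htp htq

/-- In a gammoid `Γ(D,T,E)` with `T ⊆ E`: if every directed path starting at `e`
and ending in `T` passes through `t ∈ T`, and `{e}` is independent, then `e` and `t`
are parallel (i.e. `{e, t}` is a circuit). -/
theorem gammoid_parallel (Adj : V → V → Prop) (T E : Set V) (M : Matroid V)
    (hM : IsGammoid Adj T E M) (hTE : T ⊆ E) (t : V) (ht : t ∈ T)
    (e : V) (he : e ∈ E \ T)
    (hpath : ∀ p, IsPath Adj p → p.head? = some e →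
      (∃ y ∈ T, p.getLast? = some y) → t ∈ p)
    (hind : M.Indep {e}) :
    e ≠ t ∧ Circuit M {e, t} := by
  have het : e ≠ t := fun h ↦ he.2 (h ▸ ht)
  have hdep : ¬ M.Indep {e, t} := by
    intro h
    obtain ⟨-, R, hR⟩ := (hM.2 _).1 h
    exact not_isRouting_pair_of_forall_path_mem het hpath R hR
  exact ⟨het, circuit_pair_of_not_indep het hind (hM.indep_singleton_of_mem hTE ht) hdep⟩
end PositroidPaper
end
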